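/- For a two-component mixture hazard h_Y(y) = w(y)h_{T_1}(y) + (1 − w(y))h_{T_2}(y) with weight w(y) = p S_{T_1}(y)/(p S_{T_1}(y) + (1−p) S_{T_2}(y)), where T_j ~ BS(α_j, β_j) and the hazard of BS(α,β) tends to 1/(2α²β) as y → ∞: if α_2²β_2 < α_1²β_1 then lim_{y→∞} h_Y(y) = 1/(2α_1²β_1), and if α_2²β_2 > α_1²β_1 then lim_{y→∞} h_Y(y) = 1/(2α_2²β_2). -/

import Mathlib

/-! The mixture hazard is the average of the component hazards weighted by the survival
functions. Since `(log S)' = -h`, a strictly larger limiting hazard of the second component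
makes `log (S₂ / S₁)` decrease at least linearly, so `S₂ / S₁ → 0`, the weight of the first
component tends to `1`, and the mixture hazard tends to the smaller limit `1 / (2 α₁² β₁)`. -/

open Real MeasureTheory Filter Topology ProbabilityTheory

noncomputable def stdNormalPdf (x : ℝ) : ℝ := (Real.sqrt (2 * Real.pi))⁻¹ * Real.exp (-x ^ 2 / 2)

noncomputable def stdNormalCdf (x : ℝ) : ℝ := ∫ t in Set.Iic x, stdNormalPdf t

noncomputable def aBS (α β t : ℝ) : ℝ := (Real.sqrt (t / β) - Real.sqrt (β / t)) / α

noncomputable def ABS (α β t : ℝ) : ℝ := t ^ ((-3 : ℝ) / 2) * (t + β) / (2 * α * Real.sqrt β)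

noncomputable def bsPdf (α β t : ℝ) : ℝ := stdNormalPdf (aBS α β t) * ABS α β t

lemma stdNormalPdf_eq_gaussianPDFReal : stdNormalPdf = gaussianPDFReal 0 1 := by
  ext x
  simp [stdNormalPdf, gaussianPDFReal]

lemma stdNormalPdf_pos (x : ℝ) : 0 < stdNormalPdf x := by
  rw [stdNormalPdf_eq_gaussianPDFReal]
  exact gaussianPDFReal_pos _ _ _ one_ne_zero

lemma integrable_stdNormalPdf : Integrable stdNormalPdf :=
  stdNormalPdf_eq_gaussianPDFReal ▸ integrable_gaussianPDFReal 0 1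

lemma one_sub_stdNormalCdf (x : ℝ) : 1 - stdNormalCdf x = ∫ t in Set.Ioi x, stdNormalPdf t := by
  have htotal : ∫ t, stdNormalPdf t = 1 := by
    rw [stdNormalPdf_eq_gaussianPDFReal]
    exact integral_gaussianPDFReal_eq_one 0 one_ne_zero
  rw [← htotal, ← setIntegral_univ, ← Set.Iic_union_Ioi (a := x),
    setIntegral_union (Set.Iic_disjoint_Ioi le_rfl) measurableSet_Ioi
      integrable_stdNormalPdf.integrableOn integrable_stdNormalPdf.integrableOn, stdNormalCdf]
  ring

lemma one_sub_stdNormalCdf_pos (x : ℝ) : 0 < 1 - stdNormalCdf x := by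
  have hsupp : Function.support stdNormalPdf = Set.univ :=
    Function.support_eq_univ fun t => (stdNormalPdf_pos t).ne'
  rw [one_sub_stdNormalCdf, setIntegral_pos_iff_support_of_nonneg_ae
    (ae_of_all _ fun t => (stdNormalPdf_pos t).le) integrable_stdNormalPdf.integrableOn,
    hsupp, Set.univ_inter, Real.volume_Ioi]
  exact ENNReal.zero_lt_top

lemma hasDerivAt_integral_Iic {E : Type*} [NormedAddCommGroup E] [NormedSpace ℝ E]
    [CompleteSpace E] {f : ℝ → E} (hf : Integrable f) (hfc : Continuous f) (x : ℝ) :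
    HasDerivAt (fun y => ∫ t in Set.Iic y, f t) (f x) x := by
  have hsplit : (fun y => ∫ t in Set.Iic y, f t) =
      fun y => (∫ t in Set.Iic 0, f t) + ∫ t in (0)..y, f t := by
    ext y
    rw [← intervalIntegral.integral_Iic_sub_Iic hf.integrableOn hf.integrableOn]
    abel
  rw [hsplit]
  exact (intervalIntegral.integral_hasDerivAt_right hf.intervalIntegrable
    (hfc.stronglyMeasurableAtFilter _ _) hfc.continuousAt).const_add _

lemma hasDerivAt_stdNormalCdf (x : ℝ) : HasDerivAt stdNormalCdf (stdNormalPdf x) x :=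
  hasDerivAt_integral_Iic integrable_stdNormalPdf (by unfold stdNormalPdf; fun_prop) x

lemma hasDerivAt_aBS {α β y : ℝ} (hβ : 0 < β) (hy : 0 < y) :
    HasDerivAt (aBS α β) (ABS α β y) y := by
  have hderiv : HasDerivAt (aBS α β)
      ((1 / β / (2 * √(y / β)) - -(β / y ^ 2) / (2 * √(β / y))) / α) y := by
    have h₁ := ((hasDerivAt_id y).div_const β).sqrt (by positivity)
    have h₂ := ((hasDerivAt_inv hy.ne').const_mul β).sqrt (by positivity)
    simp only [id, mul_neg, ← div_eq_mul_inv] at h₁ h₂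
    exact (h₁.sub h₂).div_const α
  convert hderiv using 1
  have hrpow : y ^ ((-3 : ℝ) / 2) = (y * √y)⁻¹ := by
    rw [show ((-3 : ℝ) / 2) = -(1 + 1 / 2) by norm_num, Real.rpow_neg hy.le,
      Real.rpow_add hy, Real.rpow_one, ← Real.sqrt_eq_rpow]
  rw [ABS, hrpow, Real.sqrt_div hy.le, Real.sqrt_div hβ.le]
  field_simp
  rw [Real.sq_sqrt hy.le, Real.sq_sqrt hβ.le]
  ring

lemma hasDerivAt_one_sub_stdNormalCdf_aBS {α β y : ℝ} (hβ : 0 < β) (hy : 0 < y) :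
    HasDerivAt (fun t => 1 - stdNormalCdf (aBS α β t)) (-bsPdf α β y) y := by
  simpa [bsPdf] using ((hasDerivAt_stdNormalCdf _).comp y (hasDerivAt_aBS hβ hy)).const_sub 1

lemma tendsto_atBot_of_hasDerivAt_le_neg {f f' : ℝ → ℝ} {c : ℝ} (hc : 0 < c)
    (hf : ∀ᶠ x in atTop, HasDerivAt f (f' x) x) (hf' : ∀ᶠ x in atTop, f' x ≤ -c) :
    Tendsto f atTop atBot := by
  obtain ⟨Y, hY⟩ := (hf.and hf').exists_forall_of_atTop
  have hg : ∀ x ≥ Y, HasDerivAt (fun x => f x + c * x) (f' x + c) x := fun x hx => by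
    simpa using (hY x hx).1.fun_add ((hasDerivAt_id' x).const_mul c)
  have hanti : AntitoneOn (fun x => f x + c * x) (Set.Ici Y) := by
    refine antitoneOn_of_hasDerivWithinAt_nonpos (f' := fun x => f' x + c) (convex_Ici Y)
      (fun x hx => (hg x hx).continuousAt.continuousWithinAt) (fun x hx => ?_) (fun x hx => ?_)
    all_goals rw [interior_Ici] at hx
    · exact (hg x hx.le).hasDerivWithinAt
    · linarith [(hY x hx.le).2]
  have hle : ∀ x ≥ Y, f x ≤ f Y + c * Y - c * x := fun x hx => by
    linarith [hanti Set.self_mem_Ici hx hx]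
  refine tendsto_atBot_mono' atTop ((eventually_ge_atTop Y).mono hle) ?_
  exact tendsto_atBot_add_const_left _ _
    (tendsto_neg_atTop_atBot.comp (tendsto_id.const_mul_atTop hc))

lemma tendsto_div_nhds_zero_of_hazard_lt {Sa Sb fa fb : ℝ → ℝ} {ℓa ℓb : ℝ}
    (hSa : ∀ᶠ y in atTop, 0 < Sa y) (hSb : ∀ᶠ y in atTop, 0 < Sb y)
    (hda : ∀ᶠ y in atTop, HasDerivAt Sa (-fa y) y) (hdb : ∀ᶠ y in atTop, HasDerivAt Sb (-fb y) y)
    (hla : Tendsto (fun y => fa y / Sa y) atTop (𝓝 ℓa))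
    (hlb : Tendsto (fun y => fb y / Sb y) atTop (𝓝 ℓb)) (hlt : ℓa < ℓb) :
    Tendsto (fun y => Sb y / Sa y) atTop (𝓝 0) := by
  have hlog : ∀ᶠ y in atTop, HasDerivAt (fun t => Real.log (Sb t) - Real.log (Sa t))
      (fa y / Sa y - fb y / Sb y) y := by
    filter_upwards [hSa, hSb, hda, hdb] with y hya hyb hdya hdyb
    exact ((hdyb.log hyb.ne').fun_sub (hdya.log hya.ne')).congr_deriv (by ring)
  have hmargin : ∀ᶠ y in atTop, fa y / Sa y - fb y / Sb y ≤ -((ℓb - ℓa) / 2) :=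
    (hla.sub hlb).eventually (Iic_mem_nhds (by linarith))
  have hbot := tendsto_atBot_of_hasDerivAt_le_neg (by linarith) hlog hmargin
  refine (Real.tendsto_exp_atBot.comp hbot).congr' ?_
  filter_upwards [hSa, hSb] with y hya hyb
  simp [Real.exp_sub, Real.exp_log hya, Real.exp_log hyb]

lemma tendsto_mul_div_mul_add_mul_nhds_one {Sa Sb : ℝ → ℝ} {a : ℝ} (b : ℝ) (ha : a ≠ 0)
    (hSa : ∀ᶠ y in atTop, Sa y ≠ 0) (hr : Tendsto (fun y => Sb y / Sa y) atTop (𝓝 0)) :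
    Tendsto (fun y => a * Sa y / (a * Sa y + b * Sb y)) atTop (𝓝 1) := by
  have hlim : Tendsto (fun y => a / (a + b * (Sb y / Sa y))) atTop (𝓝 (a / (a + b * 0))) :=
    tendsto_const_nhds.div (tendsto_const_nhds.add (hr.const_mul b)) (by simpa using ha)
  rw [mul_zero, add_zero, div_self ha] at hlim
  refine hlim.congr' ?_
  filter_upwards [hSa] with y hy
  field_simp

lemma tendsto_mul_div_mul_add_mul_nhds_zero {Sa Sb : ℝ → ℝ} (a : ℝ) {b : ℝ} (hb : b ≠ 0)
    (hSb : ∀ᶠ y in atTop, Sb y ≠ 0) (hr : Tendsto (fun y => Sa y / Sb y) atTop (𝓝 0)) :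
    Tendsto (fun y => a * Sa y / (a * Sa y + b * Sb y)) atTop (𝓝 0) := by
  have hlim : Tendsto (fun y => a * (Sa y / Sb y) / (a * (Sa y / Sb y) + b)) atTop
      (𝓝 (a * 0 / (a * 0 + b))) :=
    (hr.const_mul a).div ((hr.const_mul a).add tendsto_const_nhds) (by simpa using hb)
  rw [mul_zero, zero_div] at hlim
  refine hlim.congr' ?_
  filter_upwards [hSb] with y hy
  field_simp

theorem fmbs_hazard_limit (α₁ α₂ β₁ β₂ p : ℝ)
    (hα₁ : 0 < α₁) (hα₂ : 0 < α₂) (hβ₁ : 0 < β₁) (hβ₂ : 0 < β₂)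
    (hp : 0 < p) (hp1 : p < 1)
    (S₁ S₂ h₁ h₂ w hY : ℝ → ℝ)
    (hS₁ : ∀ y, S₁ y = 1 - stdNormalCdf (aBS α₁ β₁ y))
    (hS₂ : ∀ y, S₂ y = 1 - stdNormalCdf (aBS α₂ β₂ y))
    (hh₁ : ∀ y, h₁ y = bsPdf α₁ β₁ y / S₁ y)
    (hh₂ : ∀ y, h₂ y = bsPdf α₂ β₂ y / S₂ y)
    (hw : ∀ y, w y = p * S₁ y / (p * S₁ y + (1 - p) * S₂ y))
    (hhY : ∀ y, hY y = w y * h₁ y + (1 - w y) * h₂ y)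
    (htend₁ : Tendsto h₁ atTop (nhds (1 / (2 * α₁ ^ 2 * β₁))))
    (htend₂ : Tendsto h₂ atTop (nhds (1 / (2 * α₂ ^ 2 * β₂)))) :
    (α₂ ^ 2 * β₂ < α₁ ^ 2 * β₁ → Tendsto hY atTop (nhds (1 / (2 * α₁ ^ 2 * β₁)))) ∧
    (α₁ ^ 2 * β₁ < α₂ ^ 2 * β₂ → Tendsto hY atTop (nhds (1 / (2 * α₂ ^ 2 * β₂)))) := by
  have hpos₁ : ∀ᶠ y in atTop, 0 < S₁ y := .of_forall fun y => hS₁ y ▸ one_sub_stdNormalCdf_pos _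
  have hpos₂ : ∀ᶠ y in atTop, 0 < S₂ y := .of_forall fun y => hS₂ y ▸ one_sub_stdNormalCdf_pos _
  have hderiv₁ : ∀ᶠ y in atTop, HasDerivAt S₁ (-bsPdf α₁ β₁ y) y :=
    (eventually_gt_atTop 0).mono fun _ hy =>
      funext hS₁ ▸ hasDerivAt_one_sub_stdNormalCdf_aBS hβ₁ hy
  have hderiv₂ : ∀ᶠ y in atTop, HasDerivAt S₂ (-bsPdf α₂ β₂ y) y :=
    (eventually_gt_atTop 0).mono fun _ hy =>
      funext hS₂ ▸ hasDerivAt_one_sub_stdNormalCdf_aBS hβ₂ hy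
  have hhaz₁ := htend₁.congr hh₁
  have hhaz₂ := htend₂.congr hh₂
  have hmix : ∀ c, Tendsto w atTop (𝓝 c) →
      Tendsto hY atTop (𝓝 (c * (1 / (2 * α₁ ^ 2 * β₁)) + (1 - c) * (1 / (2 * α₂ ^ 2 * β₂)))) :=
    fun c hc => ((hc.mul htend₁).add ((tendsto_const_nhds.sub hc).mul htend₂)).congr
      fun y => (hhY y).symm
  refine ⟨fun hlt => ?_, fun hlt => ?_⟩
  · have hr := tendsto_div_nhds_zero_of_hazard_lt hpos₁ hpos₂ hderiv₁ hderiv₂ hhaz₁ hhaz₂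
      (one_div_lt_one_div_of_lt (by positivity) (by linarith))
    simpa using hmix 1 ((tendsto_mul_div_mul_add_mul_nhds_one (1 - p) hp.ne'
      (hpos₁.mono fun _ => ne_of_gt) hr).congr fun y => (hw y).symm)
  · have hr := tendsto_div_nhds_zero_of_hazard_lt hpos₂ hpos₁ hderiv₂ hderiv₁ hhaz₂ hhaz₁
      (one_div_lt_one_div_of_lt (by positivity) (by linarith))
    simpa using hmix 0 ((tendsto_mul_div_mul_add_mul_nhds_zero p (sub_ne_zero.2 hp1.ne')
      (hpos₂.mono fun _ => ne_of_gt) hr).congr fun y => (hw y).symm)
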